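/- arXiv:1207.5926 — 7 statements merged into one kernel-verified Lean document; each statement's English description precedes it below -/
import Mathlib

section
/- Let f : Fin 9 × Fin 9 → Fin 9 be a filling of a Sudoku grid. If f is injective on each of the three boxes of the top horizontal chute, and injective on rows 0 and 2, then f is injective on row 1. -/
def sudokuRow (i : Fin 9) : Set (Fin 9 × Fin 9) := {p | p.1 = i}
def sudokuBox (a b : Fin 3) : Set (Fin 9 × Fin 9) :=
  {p | (p.1 : ℕ) / 3 = (a : ℕ) ∧ (p.2 : ℕ) / 3 = (b : ℕ)}

theorem chute_lemma_row (f : Fin 9 × Fin 9 → Fin 9)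
    (hb0 : Set.InjOn f (sudokuBox 0 0)) (hb1 : Set.InjOn f (sudokuBox 0 1))
    (hb2 : Set.InjOn f (sudokuBox 0 2))
    (h0 : Set.InjOn f (sudokuRow 0)) (h2 : Set.InjOn f (sudokuRow 2)) :
    Set.InjOn f (sudokuRow 1) := by
  have hbox : ∀ (k : ℕ) (p q : Fin 9 × Fin 9), (p.1 : ℕ) / 3 = 0 → (p.2 : ℕ) / 3 = k →
      (q.1 : ℕ) / 3 = 0 → (q.2 : ℕ) / 3 = k → f p = f q → p = q := by
    intro k p q h1 h2 h3 h4 hf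
    have hk : k < 3 := by have := p.2.isLt; omega
    interval_cases k
    · exact hb0 ⟨h1, h2⟩ ⟨h3, h4⟩ hf
    · exact hb1 ⟨h1, h2⟩ ⟨h3, h4⟩ hf
    · exact hb2 ⟨h1, h2⟩ ⟨h3, h4⟩ hf
  have hsurj : ∀ (i : Fin 9), Set.InjOn f (sudokuRow i) → ∀ v : Fin 9, ∃ j, f (i, j) = v := by
    intro i hi v
    have hinj : Function.Injective (fun j : Fin 9 => f (i, j)) := by
      intro x y h
      have := hi (show ((i, x) : Fin 9 × Fin 9) ∈ sudokuRow i from rfl)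
        (show ((i, y) : Fin 9 × Fin 9) ∈ sudokuRow i from rfl) h
      exact congrArg Prod.snd this
    exact Finite.injective_iff_surjective.mp hinj v
  intro p hp q hq hf
  obtain ⟨pi, a⟩ := p
  obtain ⟨qi, b⟩ := q
  have hpi : pi = 1 := hp
  have hqi : qi = 1 := hq
  subst hpi; subst hqi
  by_cases hab : (a : ℕ) / 3 = (b : ℕ) / 3
  · exact hbox ((b : ℕ) / 3) (1, a) (1, b) (by norm_num) hab (by norm_num) rfl hf
  · exfalso
    obtain ⟨c0, hc0⟩ := hsurj 0 h0 (f (1, a))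
    obtain ⟨c2, hc2⟩ := hsurj 2 h2 (f (1, a))
    have key : ∀ (i : Fin 9) (c : Fin 9), f (i, c) = f (1, a) → (i : ℕ) / 3 = 0 → i ≠ 1 →
        (c : ℕ) / 3 ≠ (a : ℕ) / 3 ∧ (c : ℕ) / 3 ≠ (b : ℕ) / 3 := by
      intro i c hfc hi hne
      constructor
      · intro hc
        have := hbox ((a : ℕ) / 3) (i, c) (1, a) hi hc (by norm_num) rfl hfc
        exact hne (congrArg Prod.fst this)
      · intro hc
        have := hbox ((b : ℕ) / 3) (i, c) (1, b) hi hc (by norm_num) rfl (hfc.trans hf)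
        exact hne (congrArg Prod.fst this)
    obtain ⟨ha0, hb0'⟩ := key 0 c0 hc0 rfl (by decide)
    obtain ⟨ha2, hb2'⟩ := key 2 c2 hc2 rfl (by decide)
    have heq : (c0 : ℕ) / 3 = (c2 : ℕ) / 3 := by
      have := a.isLt; have := b.isLt; have := c0.isLt; have := c2.isLt
      omega
    have := hbox ((c2 : ℕ) / 3) (0, c0) (2, c2) (by norm_num) heq (by norm_num) rfl (hc0.trans hc2.symm)
    exact absurd (congrArg Prod.fst this) (by simp)
end

section
/- If a function f : Fin 3 × Fin 9 → Fin 9 is injective on each of the three rows of a chute and on two of its three boxes, then each value n ∈ Fin 9 occurs exactly three times in the chute, exactly once in each of those two boxes, and hence exactly once in the remaining box. -/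
def chuteRow (i : Fin 3) : Set (Fin 3 × Fin 9) := {p | p.1 = i}
def chuteBox (k : Fin 3) : Set (Fin 3 × Fin 9) := {p | (p.2 : ℕ) / 3 = (k : ℕ)}

private lemma key_count (f : Fin 3 × Fin 9 → Fin 9) (n : Fin 9)
    (S : Finset (Fin 3 × Fin 9)) (hS : S.card = 9) (hinj : Set.InjOn f S) :
    (S.filter (fun p => f p = n)).card = 1 := by
  have himg : (S.image f).card = 9 := by
    rw [Finset.card_image_of_injOn hinj, hS]
  have huniv : S.image f = Finset.univ :=
    Finset.eq_univ_of_card _ (by simp [himg])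
  have hn : n ∈ S.image f := huniv ▸ Finset.mem_univ n
  obtain ⟨p, hp, hfp⟩ := Finset.mem_image.mp hn
  rw [Finset.card_eq_one]
  refine ⟨p, ?_⟩
  ext q
  simp only [Finset.mem_filter, Finset.mem_singleton]
  constructor
  · rintro ⟨hq, hfq⟩
    exact hinj hq hp (hfq.trans hfp.symm)
  · rintro rfl; exact ⟨hp, hfp⟩

private lemma row_card (i : Fin 3) :
    (Finset.univ.filter (fun p : Fin 3 × Fin 9 => p.1 = i)).card = 9 := by
  fin_cases i <;> decide

private lemma box_card (k : Fin 3) :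
    (Finset.univ.filter (fun p : Fin 3 × Fin 9 => (p.2 : ℕ) / 3 = (k : ℕ))).card = 9 := by
  fin_cases k <;> decide

private lemma box_count (f : Fin 3 × Fin 9 → Fin 9) (n : Fin 9) (k : Fin 3)
    (hb : Set.InjOn f (chuteBox k)) :
    (Finset.univ.filter (fun p : Fin 3 × Fin 9 =>
        f p = n ∧ (p.2 : ℕ) / 3 = (k : ℕ))).card = 1 := by
  have := key_count f n
      (Finset.univ.filter (fun p : Fin 3 × Fin 9 => (p.2 : ℕ) / 3 = (k : ℕ)))
      (box_card k)
      (hb.mono (by intro p hp; simp only [Finset.coe_filter, Set.mem_setOf_eq] at hp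
                   exact hp.2))
  rw [Finset.filter_filter] at this
  have heq : (Finset.univ.filter (fun p : Fin 3 × Fin 9 =>
      f p = n ∧ (p.2 : ℕ) / 3 = (k : ℕ))) =
      Finset.univ.filter (fun p : Fin 3 × Fin 9 =>
        (p.2 : ℕ) / 3 = (k : ℕ) ∧ f p = n) := by
    ext p; simp [and_comm]
  rw [heq]; exact this

theorem chute_counts (f : Fin 3 × Fin 9 → Fin 9) (k1 k2 : Fin 3) (hk : k1 ≠ k2)
    (hrows : ∀ i : Fin 3, Set.InjOn f (chuteRow i))
    (hb1 : Set.InjOn f (chuteBox k1)) (hb2 : Set.InjOn f (chuteBox k2)) :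
    ∀ n : Fin 9,
      (Finset.univ.filter (fun p : Fin 3 × Fin 9 => f p = n)).card = 3 ∧
      (Finset.univ.filter (fun p : Fin 3 × Fin 9 =>
          f p = n ∧ (p.2 : ℕ) / 3 = (k1 : ℕ))).card = 1 ∧
      (Finset.univ.filter (fun p : Fin 3 × Fin 9 =>
          f p = n ∧ (p.2 : ℕ) / 3 = (k2 : ℕ))).card = 1 ∧
      ∀ k : Fin 3, k ≠ k1 → k ≠ k2 →
        (Finset.univ.filter (fun p : Fin 3 × Fin 9 =>
            f p = n ∧ (p.2 : ℕ) / 3 = (k : ℕ))).card = 1 := by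
  intro n
  -- total count = 3
  have hrowcount : ∀ i : Fin 3,
      (Finset.univ.filter (fun p : Fin 3 × Fin 9 => f p = n ∧ p.1 = i)).card = 1 := by
    intro i
    have := key_count f n
        (Finset.univ.filter (fun p : Fin 3 × Fin 9 => p.1 = i))
        (row_card i)
        ((hrows i).mono (by intro p hp; simpa [chuteRow] using hp))
    rw [Finset.filter_filter] at this
    have heq : (Finset.univ.filter (fun p : Fin 3 × Fin 9 => f p = n ∧ p.1 = i)) =
        Finset.univ.filter (fun p : Fin 3 × Fin 9 => p.1 = i ∧ f p = n) := by
      ext p; simp [and_comm]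
    rw [heq]; exact this
  have htotal : (Finset.univ.filter (fun p : Fin 3 × Fin 9 => f p = n)).card = 3 := by
    have hfib := Finset.card_eq_sum_card_fiberwise
      (s := Finset.univ.filter (fun p : Fin 3 × Fin 9 => f p = n))
      (t := (Finset.univ : Finset (Fin 3))) (f := Prod.fst)
      (fun x _ => Finset.mem_univ _)
    rw [hfib]
    have : ∀ i : Fin 3,
        ((Finset.univ.filter (fun p : Fin 3 × Fin 9 => f p = n)).filter
          (fun p => p.1 = i)).card = 1 := by
      intro i
      rw [Finset.filter_filter]
      exact hrowcount i
    simp [this]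
  refine ⟨htotal, box_count f n k1 hb1, box_count f n k2 hb2, ?_⟩
  intro k hkk1 hkk2
  -- sum of box counts = 3
  set c : Fin 3 → ℕ := fun j =>
    (Finset.univ.filter (fun p : Fin 3 × Fin 9 =>
        f p = n ∧ (p.2 : ℕ) / 3 = (j : ℕ))).card with hc
  have hsum : c 0 + c 1 + c 2 = 3 := by
    have hfib := Finset.card_eq_sum_card_fiberwise
      (s := Finset.univ.filter (fun p : Fin 3 × Fin 9 => f p = n))
      (t := (Finset.univ : Finset (Fin 3)))
      (f := fun p => (⟨(p.2 : ℕ) / 3, by omega⟩ : Fin 3))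
      (fun x _ => Finset.mem_univ _)
    rw [htotal] at hfib
    have heq : ∀ j : Fin 3,
        ((Finset.univ.filter (fun p : Fin 3 × Fin 9 => f p = n)).filter
          (fun p => (⟨(p.2 : ℕ) / 3, by omega⟩ : Fin 3) = j)).card = c j := by
      intro j
      rw [Finset.filter_filter, hc]
      congr 1
      ext p
      simp [Fin.ext_iff]
    rw [Fin.sum_univ_three] at hfib
    rw [heq 0, heq 1, heq 2] at hfib
    omega
  have h1 : c k1 = 1 := box_count f n k1 hb1
  have h2 : c k2 = 1 := box_count f n k2 hb2
  show c k = 1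
  fin_cases k <;> fin_cases k1 <;> fin_cases k2 <;> simp_all <;> omega
end

section
/- Every single big Sudoku constraint is redundant: for each of the 27 all_different constraints C (a row, column, or box constraint), any filling f : Fin 9 × Fin 9 → Fin 9 satisfying the other 26 constraints also satisfies C. -/
inductive SudokuCon where
  | row (i : Fin 9)
  | col (j : Fin 9)
  | box (a b : Fin 3)

def SudokuCon.set : SudokuCon → Set (Fin 9 × Fin 9)
  | .row i => {p | p.1 = i}
  | .col j => {p | p.2 = j}
  | .box a b => {p | (p.1 : ℕ) / 3 = (a : ℕ) ∧ (p.2 : ℕ) / 3 = (b : ℕ)}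

def sat (f : Fin 9 × Fin 9 → Fin 9) (c : SudokuCon) : Prop := Set.InjOn f c.set

/-
Fix a value `v`. Each of the nine columns holds `v` exactly once, so `v` occurs nine times in the
grid; each of the eight other rows holds it exactly once, so the remaining row holds it exactly once
too. A row of nine cells containing every value once is injective. Columns and boxes are handled
the same way, playing rows against them.
-/

open Finset

section Fibers

variable {α β ι κ : Type*} [DecidableEq β]

lemma card_filter_eq_one_of_injOn [Fintype β] {s : Finset α} {f : α → β}
    (hcard : #s = Fintype.card β) (hinj : Set.InjOn f s) (v : β) : #{p ∈ s | f p = v} = 1 := by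
  have himg : s.image f = univ := eq_univ_of_card _ (by rw [card_image_of_injOn hinj, hcard])
  obtain ⟨p, hp, rfl⟩ := mem_image.mp (himg ▸ mem_univ v)
  exact card_eq_one.mpr ⟨p, eq_singleton_iff_unique_mem.mpr
    ⟨mem_filter.mpr ⟨hp, rfl⟩, fun q hq => hinj (mem_filter.mp hq).1 hp (mem_filter.mp hq).2⟩⟩

lemma injOn_of_card_filter_le_one {s : Finset α} {f : α → β}
    (h : ∀ v, #{p ∈ s | f p = v} ≤ 1) : Set.InjOn f s := fun p hp q hq hpq =>
  card_le_one.mp (h (f q)) p (mem_filter.mpr ⟨hp, hpq⟩) q (mem_filter.mpr ⟨hq, rfl⟩)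

variable [Fintype α] [DecidableEq ι]

lemma card_filter_and_eq_one_of_injOn [Fintype β] {f : α → β} {g : α → ι} {j : ι}
    (hg : #{p | g p = j} = Fintype.card β) (hf : Set.InjOn f {p | g p = j}) (v : β) :
    #{p | g p = j ∧ f p = v} = 1 := by
  rw [← filter_filter]
  exact card_filter_eq_one_of_injOn hg (by simpa using hf) v

lemma card_filter_eq_sum_card_filter_and [Fintype ι] (f : α → β) (g : α → ι) (v : β) :
    #{p | f p = v} = ∑ j, #{p | g p = j ∧ f p = v} := by
  rw [card_eq_sum_card_fiberwise (f := g) (t := univ) (fun _ _ => mem_coe.mpr (mem_univ _))]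
  simp_rw [filter_filter, and_comm]

variable [Fintype β] [Fintype ι]

lemma card_filter_eq_card_of_injOn_fibers {f : α → β} {g : α → ι}
    (hg : ∀ j, #{p | g p = j} = Fintype.card β) (hf : ∀ j, Set.InjOn f {p | g p = j}) (v : β) :
    #{p | f p = v} = Fintype.card ι := by
  simp [card_filter_eq_sum_card_filter_and f g, card_filter_and_eq_one_of_injOn (hg _) (hf _)]

theorem injOn_fiber_of_injOn_other_fibers [DecidableEq κ] [Fintype κ] {f : α → β} {g : α → ι}
    {h : α → κ} (hcard : Fintype.card κ = Fintype.card ι)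
    (hg : ∀ j, #{p | g p = j} = Fintype.card β) (hh : ∀ j, #{p | h p = j} = Fintype.card β)
    (hfg : ∀ j, Set.InjOn f {p | g p = j}) {k : κ} (hfh : ∀ j ≠ k, Set.InjOn f {p | h p = j}) :
    Set.InjOn f {p | h p = k} := by
  suffices ∀ v, #{p | h p = k ∧ f p = v} ≤ 1 by
    simpa using injOn_of_card_filter_le_one (s := {p | h p = k}) (f := f) (by simpa [filter_filter])
  intro v
  have total := card_filter_eq_card_of_injOn_fibers hg hfg v
  rw [card_filter_eq_sum_card_filter_and f h, ← add_sum_erase _ _ (mem_univ k)] at total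
  have others : ∑ j ∈ univ.erase k, #{p | h p = j ∧ f p = v} = Fintype.card κ - 1 := by
    rw [sum_congr rfl fun j hj =>
      card_filter_and_eq_one_of_injOn (hh j) (hfh j (ne_of_mem_erase hj)) v]
    simp [card_erase_of_mem]
  have : 0 < Fintype.card κ := Fintype.card_pos_iff.mpr ⟨k⟩
  omega

end Fibers

def boxOf (p : Fin 9 × Fin 9) : Fin 3 × Fin 3 :=
  (⟨p.1 / 3, by omega⟩, ⟨p.2 / 3, by omega⟩)

lemma SudokuCon.set_box (a b : Fin 3) : (box a b).set = {p | boxOf p = (a, b)} := by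
  ext p
  simp [SudokuCon.set, boxOf, Prod.ext_iff, Fin.ext_iff]

theorem every_single_big_constraint_redundant :
    ∀ C : SudokuCon, ∀ f : Fin 9 × Fin 9 → Fin 9,
      (∀ C' : SudokuCon, C' ≠ C → sat f C') → sat f C := by
  intro C f hf
  cases C with
  | row i =>
    exact injOn_fiber_of_injOn_other_fibers (g := Prod.snd) rfl (by decide) (by decide)
      (fun j => hf (.col j) (by simp)) (fun j hj => hf (.row j) (by simpa))
  | col i =>
    exact injOn_fiber_of_injOn_other_fibers (g := Prod.fst) rfl (by decide) (by decide)
      (fun j => hf (.row j) (by simp)) (fun j hj => hf (.col j) (by simpa))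
  | box a b =>
    rw [sat, SudokuCon.set_box]
    refine injOn_fiber_of_injOn_other_fibers (g := Prod.fst) (h := boxOf) rfl
      (by decide) (by decide) (fun j => hf (.row j) (by simp)) fun ⟨c, d⟩ hcd => ?_
    rw [← SudokuCon.set_box]
    exact hf (.box c d) (by simpa using hcd)
end

section
/- The set of constraints consisting of all 9 box constraints, rows 0,2,3,5,6,8 and columns 0,2,3,5,6,8 (i.e., omitting rows 1,4,7 and columns 1,4,7, the middle row and middle column of each chute) entails all 27 Sudoku constraints: any filling satisfying these 21 constraints satisfies all 27. -/
def sudokuCol (j : Fin 9) : Set (Fin 9 × Fin 9) := {p | p.2 = j}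
/-!
A value occurs at most once in each box, hence at most three times in a band of three boxes.
If two rows of a band are injective they contain every value, so a value repeated in the third
row would occur four times in the band. Columns follow by transposing the grid.
-/

open Set Function

variable {f : Fin 9 × Fin 9 → Fin 9}

lemma surjective_of_injOn_sudokuRow {r : Fin 9} (hr : InjOn f (sudokuRow r)) :
    Surjective fun c => f (r, c) :=
  Finite.surjective_of_injective fun _ _ h => (Prod.mk.inj (hr rfl rfl h)).2

lemma card_le_three_of_band {ι : Type*} [Fintype ι] {a : Fin 3} {v : Fin 9}
    (hb : ∀ b, InjOn f (sudokuBox a b)) {p : ι → Fin 9 × Fin 9} (hp : Injective p)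
    (hband : ∀ t, ((p t).1 : ℕ) / 3 = a) (hv : ∀ t, f (p t) = v) :
    Fintype.card ι ≤ 3 := by
  let stack t : Fin 3 := ⟨(p t).2 / 3, by omega⟩
  have hstack : Injective stack := fun t t' h =>
    hp <| hb (stack t) ⟨hband t, rfl⟩ ⟨hband t', (Fin.mk.inj_iff.mp h).symm⟩
      ((hv t).trans (hv t').symm)
  simpa using Fintype.card_le_of_injective stack hstack

lemma exists_two_other_rows_of_band (s : Fin 9) :
    ∃ r₁ r₂ : Fin 9,
      (r₁ : ℕ) / 3 = s / 3 ∧ (r₂ : ℕ) / 3 = s / 3 ∧ r₁ ≠ s ∧ r₂ ≠ s ∧ r₁ ≠ r₂ := by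
  revert s; decide

lemma injOn_sudokuRow_of_band {s : Fin 9} {a : Fin 3} (hs : (s : ℕ) / 3 = a)
    (hb : ∀ b, InjOn f (sudokuBox a b))
    (hrows : ∀ r : Fin 9, (r : ℕ) / 3 = a → r ≠ s → InjOn f (sudokuRow r)) :
    InjOn f (sudokuRow s) := by
  rintro ⟨r, j⟩ (hr : r = s) ⟨r', k⟩ (hr' : r' = s) hjk
  subst r r'
  by_contra hne
  obtain ⟨r₁, r₂, h₁, h₂, h₁s, h₂s, h₁₂⟩ := exists_two_other_rows_of_band s
  rw [hs] at h₁ h₂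
  obtain ⟨c₁, hc₁⟩ := surjective_of_injOn_sudokuRow (hrows r₁ h₁ h₁s) (f (s, j))
  obtain ⟨c₂, hc₂⟩ := surjective_of_injOn_sudokuRow (hrows r₂ h₂ h₂s) (f (s, j))
  have hjk_ne : j ≠ k := fun h => hne (h ▸ rfl)
  suffices Fintype.card (Fin 4) ≤ 3 by simp at this
  refine card_le_three_of_band hb (v := f (s, j))
    (p := ![(r₁, c₁), (r₂, c₂), (s, j), (s, k)]) ?_ ?_ ?_
  · intro t t' h
    fin_cases t <;> fin_cases t' <;> simp_all [Prod.ext_iff, eq_comm]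
  · intro t; fin_cases t <;> simp [*]
  · intro t; fin_cases t <;> simp [*]

lemma injOn_comp_swap_iff {t : Set (Fin 9 × Fin 9)} :
    InjOn (f ∘ Prod.swap) t ↔ InjOn f (Prod.swap ⁻¹' t) := by
  rw [Prod.swap_injective.injOn.comp_iff, image_swap_eq_preimage_swap]

lemma injOn_sudokuCol_of_stack {s : Fin 9} {b : Fin 3} (hs : (s : ℕ) / 3 = b)
    (hb : ∀ a, InjOn f (sudokuBox a b))
    (hcols : ∀ c : Fin 9, (c : ℕ) / 3 = b → c ≠ s → InjOn f (sudokuCol c)) :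
    InjOn f (sudokuCol s) := by
  have := injOn_sudokuRow_of_band (f := f ∘ Prod.swap) hs
    (fun a => injOn_comp_swap_iff.2 ((hb a).mono fun p hp => hp.symm))
    fun c hc hcs => injOn_comp_swap_iff.2 (hcols c hc hcs)
  exact injOn_comp_swap_iff.1 this

lemma mem_or_forall_band_mem (i : Fin 9) : i ∈ ({0, 2, 3, 5, 6, 8} : Set (Fin 9)) ∨
      ∀ r : Fin 9, (r : ℕ) / 3 = i / 3 → r ≠ i → r ∈ ({0, 2, 3, 5, 6, 8} : Set (Fin 9)) := by
  simp only [mem_insert_iff, mem_singleton_iff]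
  revert i; decide

theorem omit_middle_rows_cols (f : Fin 9 × Fin 9 → Fin 9)
    (hboxes : ∀ a b : Fin 3, Set.InjOn f (sudokuBox a b))
    (hrows : ∀ i ∈ ({0, 2, 3, 5, 6, 8} : Set (Fin 9)), Set.InjOn f (sudokuRow i))
    (hcols : ∀ j ∈ ({0, 2, 3, 5, 6, 8} : Set (Fin 9)), Set.InjOn f (sudokuCol j)) :
    (∀ i : Fin 9, Set.InjOn f (sudokuRow i)) ∧
    (∀ j : Fin 9, Set.InjOn f (sudokuCol j)) ∧
    (∀ a b : Fin 3, Set.InjOn f (sudokuBox a b)) := by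
  refine ⟨fun i => ?_, fun j => ?_, hboxes⟩
  · rcases mem_or_forall_band_mem i with hi | hband
    · exact hrows i hi
    · exact injOn_sudokuRow_of_band (a := ⟨i / 3, by omega⟩) rfl (hboxes _)
        fun r hr hri => hrows r (hband r hr hri)
  · rcases mem_or_forall_band_mem j with hj | hstack
    · exact hcols j hj
    · exact injOn_sudokuCol_of_stack (b := ⟨j / 3, by omega⟩) rfl (fun a => hboxes a _)
        fun c hc hcj => hcols c (hstack c hc hcj)
end

section
/- Suppose f : Fin 9 × Fin 9 → Fin 9 satisfies all column constraints and all box constraints. If additionally f satisfies rows 0 and 2, then f satisfies row 1; consequently, if f satisfies two rows of each horizontal chute (specifically rows 0,2,3,5,6,8), then f satisfies all 9 row constraints. -/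
lemma row_surj (f : Fin 9 × Fin 9 → Fin 9) (r : Fin 9)
    (h : Set.InjOn f (sudokuRow r)) (v : Fin 9) : ∃ j, f (r, j) = v := by
  have hinj : Function.Injective (fun j : Fin 9 => f (r, j)) := by
    intro x y hxy
    have := h (show ((r, x)) ∈ sudokuRow r from rfl)
      (show ((r, y)) ∈ sudokuRow r from rfl) hxy
    exact congrArg Prod.snd this
  exact Finite.surjective_of_injective hinj v

lemma mid_row (f : Fin 9 × Fin 9 → Fin 9)
    (hboxes : ∀ a b : Fin 3, Set.InjOn f (sudokuBox a b))
    (r0 r1 r2 : Fin 9)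
    (h01 : (r0 : ℕ) / 3 = (r1 : ℕ) / 3) (h21 : (r2 : ℕ) / 3 = (r1 : ℕ) / 3)
    (hne01 : r0 ≠ r1) (hne21 : r2 ≠ r1) (hne02 : r0 ≠ r2)
    (h0 : Set.InjOn f (sudokuRow r0)) (h2 : Set.InjOn f (sudokuRow r2)) :
    Set.InjOn f (sudokuRow r1) := by
  intro p hp q hq hfe
  have hp1 : p.1 = r1 := hp
  have hq1 : q.1 = r1 := hq
  by_cases hpq : p.2 = q.2
  · exact Prod.ext (hp1.trans hq1.symm) hpq
  exfalso
  have hb1 : (r1 : ℕ) / 3 < 3 := by omega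
  by_cases hbox : (p.2 : ℕ) / 3 = (q.2 : ℕ) / 3
  · have := hboxes ⟨(r1 : ℕ) / 3, hb1⟩ ⟨(p.2 : ℕ) / 3, by omega⟩
      (show p ∈ sudokuBox _ _ from ⟨by rw [hp1], rfl⟩)
      (show q ∈ sudokuBox _ _ from ⟨by rw [hq1], hbox.symm⟩) hfe
    exact hpq (congrArg Prod.snd this)
  obtain ⟨j0, hj0⟩ := row_surj f r0 h0 (f p)
  obtain ⟨j2, hj2⟩ := row_surj f r2 h2 (f p)
  have key0p : (j0 : ℕ) / 3 ≠ (p.2 : ℕ) / 3 := by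
    intro h
    have := hboxes ⟨(r1 : ℕ) / 3, hb1⟩ ⟨(p.2 : ℕ) / 3, by omega⟩
      (show ((r0, j0)) ∈ sudokuBox _ _ from ⟨h01, h⟩)
      (show p ∈ sudokuBox _ _ from ⟨by rw [hp1], rfl⟩) hj0
    exact hne01 ((congrArg Prod.fst this).trans hp1)
  have key0q : (j0 : ℕ) / 3 ≠ (q.2 : ℕ) / 3 := by
    intro h
    have := hboxes ⟨(r1 : ℕ) / 3, hb1⟩ ⟨(q.2 : ℕ) / 3, by omega⟩
      (show ((r0, j0)) ∈ sudokuBox _ _ from ⟨h01, h⟩)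
      (show q ∈ sudokuBox _ _ from ⟨by rw [hq1], rfl⟩) (hj0.trans hfe)
    exact hne01 ((congrArg Prod.fst this).trans hq1)
  have key2p : (j2 : ℕ) / 3 ≠ (p.2 : ℕ) / 3 := by
    intro h
    have := hboxes ⟨(r1 : ℕ) / 3, hb1⟩ ⟨(p.2 : ℕ) / 3, by omega⟩
      (show ((r2, j2)) ∈ sudokuBox _ _ from ⟨h21, h⟩)
      (show p ∈ sudokuBox _ _ from ⟨by rw [hp1], rfl⟩) hj2
    exact hne21 ((congrArg Prod.fst this).trans hp1)
  have key2q : (j2 : ℕ) / 3 ≠ (q.2 : ℕ) / 3 := by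
    intro h
    have := hboxes ⟨(r1 : ℕ) / 3, hb1⟩ ⟨(q.2 : ℕ) / 3, by omega⟩
      (show ((r2, j2)) ∈ sudokuBox _ _ from ⟨h21, h⟩)
      (show q ∈ sudokuBox _ _ from ⟨by rw [hq1], rfl⟩) (hj2.trans hfe)
    exact hne21 ((congrArg Prod.fst this).trans hq1)
  have hj0lt : (j0 : ℕ) < 9 := j0.isLt
  have hj2lt : (j2 : ℕ) < 9 := j2.isLt
  have hplt : (p.2 : ℕ) < 9 := p.2.isLt
  have hqlt : (q.2 : ℕ) < 9 := q.2.isLt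
  have jbox : (j0 : ℕ) / 3 = (j2 : ℕ) / 3 := by omega
  have := hboxes ⟨(r1 : ℕ) / 3, hb1⟩ ⟨(j0 : ℕ) / 3, by omega⟩
    (show ((r0, j0)) ∈ sudokuBox _ _ from ⟨h01, rfl⟩)
    (show ((r2, j2)) ∈ sudokuBox _ _ from ⟨h21, jbox.symm⟩)
    (hj0.trans hj2.symm)
  exact hne02 (congrArg Prod.fst this)

theorem rows_from_cols_boxes (f : Fin 9 × Fin 9 → Fin 9)
    (hcols : ∀ j : Fin 9, Set.InjOn f (sudokuCol j))
    (hboxes : ∀ a b : Fin 3, Set.InjOn f (sudokuBox a b)) :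
    ((Set.InjOn f (sudokuRow 0) → Set.InjOn f (sudokuRow 2) →
       Set.InjOn f (sudokuRow 1)) ∧
     ((∀ i ∈ ({0, 2, 3, 5, 6, 8} : Set (Fin 9)), Set.InjOn f (sudokuRow i)) →
       ∀ i : Fin 9, Set.InjOn f (sudokuRow i))) := by
  constructor
  · intro h0 h2
    exact mid_row f hboxes 0 1 2 (by decide) (by decide) (by decide) (by decide)
      (by decide) h0 h2
  · intro h i
    have g0 := h 0 (by simp)
    have g2 := h 2 (by simp)
    have g3 := h 3 (by simp)
    have g5 := h 5 (by simp)
    have g6 := h 6 (by simp)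
    have g8 := h 8 (by simp)
    fin_cases i
    · exact g0
    · exact mid_row f hboxes 0 1 2 (by decide) (by decide) (by decide) (by decide)
        (by decide) g0 g2
    · exact g2
    · exact g3
    · exact mid_row f hboxes 3 4 5 (by decide) (by decide) (by decide) (by decide)
        (by decide) g3 g5
    · exact g5
    · exact g6
    · exact mid_row f hboxes 6 7 8 (by decide) (by decide) (by decide) (by decide)
        (by decide) g6 g8
    · exact g8
end

section
/- In the generalized size-n Sudoku, the chute lemma holds: for f : Fin n × Fin (n^2) → Fin (n^2), if f is injective on all n rows of the chute and on all boxes except one, then f is injective on the remaining box. -/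
open Finset

theorem general_chute_lemma_box (n : ℕ) (f : Fin n × Fin (n ^ 2) → Fin (n ^ 2))
    (k0 : Fin n)
    (hrows : ∀ i : Fin n, Set.InjOn f {p : Fin n × Fin (n ^ 2) | p.1 = i})
    (hboxes : ∀ k : Fin n, k ≠ k0 →
      Set.InjOn f {p : Fin n × Fin (n ^ 2) | (p.2 : ℕ) / n = (k : ℕ)}) :
    Set.InjOn f {p : Fin n × Fin (n ^ 2) | (p.2 : ℕ) / n = (k0 : ℕ)} := by
  rcases Nat.eq_zero_or_pos n with hn | hn
  · subst hn; intro p hp; exact p.1.elim0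
  -- row and box finsets
  set R : Fin n → Finset (Fin n × Fin (n ^ 2)) :=
    fun i => univ.filter (fun p => p.1 = i) with hR
  set B : Fin n → Finset (Fin n × Fin (n ^ 2)) :=
    fun k => univ.filter (fun p => (p.2 : ℕ) / n = (k : ℕ)) with hB
  have hRcard : ∀ i, (R i).card = n ^ 2 := by
    intro i
    have h : R i = {i} ×ˢ (univ : Finset (Fin (n ^ 2))) := by
      ext p; simp only [hR, Finset.mem_filter, Finset.mem_univ, true_and,
        Finset.mem_product, Finset.mem_singleton]
      constructor
      · intro h; exact ⟨h, trivial⟩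
      · intro h; exact h.1
    rw [h, Finset.card_product]; simp
  have hJcard : ∀ k : Fin n,
      ((univ : Finset (Fin (n ^ 2))).filter (fun j : Fin (n ^ 2) => (j : ℕ) / n = (k : ℕ))).card = n := by
    intro k
    set J := (univ : Finset (Fin (n ^ 2))).filter (fun j : Fin (n ^ 2) => (j : ℕ) / n = (k : ℕ)) with hJ
    have himg : J.image Fin.val = Finset.Ico (n * k) (n * k + n) := by
      ext m
      simp only [hJ, Finset.mem_image, Finset.mem_filter, Finset.mem_univ, true_and,
        Finset.mem_Ico]
      constructor
      · rintro ⟨j, hj, rfl⟩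
        constructor
        · calc n * (k : ℕ) = n * ((j : ℕ) / n) := by rw [hj]
            _ ≤ j := Nat.mul_div_le _ _
        · have : (j : ℕ) < n * ((j : ℕ) / n + 1) := Nat.lt_mul_div_succ _ hn
          rw [hj, Nat.mul_succ] at this; omega
      · rintro ⟨h1, h2⟩
        have hmN : m < n ^ 2 := by
          have : n * (k : ℕ) + n ≤ n * n := by
            have := k.isLt; nlinarith
          have := pow_two n; omega
        refine ⟨⟨m, hmN⟩, ?_, rfl⟩
        show m / n = (k : ℕ)
        refine Nat.div_eq_of_lt_le ?_ ?_
        · rw [Nat.mul_comm]; omega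
        · rw [Nat.succ_mul, Nat.mul_comm]; omega
    have : J.card = (Finset.Ico (n * (k : ℕ)) (n * k + n)).card := by
      rw [← himg, Finset.card_image_of_injective _ Fin.val_injective]
    rw [this, Nat.card_Ico]; omega
  have hBcard : ∀ k, (B k).card = n ^ 2 := by
    intro k
    have h : B k = (univ : Finset (Fin n)) ×ˢ
        ((univ : Finset (Fin (n ^ 2))).filter (fun j : Fin (n ^ 2) => (j : ℕ) / n = (k : ℕ))) := by
      ext p; simp [hB, Finset.mem_product]
    rw [h, Finset.card_product, hJcard]
    simp [pow_two]
  -- surjectivity of injective full-size pieces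
  have hsurj : ∀ s : Finset (Fin n × Fin (n ^ 2)), Set.InjOn f ↑s → s.card = n ^ 2 →
      ∀ v : Fin (n ^ 2), ∃ p ∈ s, f p = v := by
    intro s hinj hcard v
    have himg : s.image f = univ := by
      apply Finset.eq_univ_of_card
      rw [Finset.card_image_of_injOn hinj, hcard]
      simp
    have : v ∈ s.image f := by rw [himg]; exact Finset.mem_univ v
    obtain ⟨p, hp, hfp⟩ := Finset.mem_image.mp this
    exact ⟨p, hp, hfp⟩
  have hRinj : ∀ i, Set.InjOn f ↑(R i) := by
    intro i a ha b hb
    exact hrows i (by simpa [hR] using ha) (by simpa [hR] using hb)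
  have hBinj : ∀ k, k ≠ k0 → Set.InjOn f ↑(B k) := by
    intro k hk a ha b hb
    exact hboxes k hk (by simpa [hB] using ha) (by simpa [hB] using hb)
  -- fiber counting for a value v
  have key : ∀ v : Fin (n ^ 2),
      ((univ : Finset (Fin n × Fin (n ^ 2))).filter
        (fun p => f p = v ∧ (p.2 : ℕ) / n = (k0 : ℕ))).card = 1 := by
    intro v
    set F := (univ : Finset (Fin n × Fin (n ^ 2))).filter (fun p => f p = v) with hF
    -- total fiber card = n, via rows
    have hrow1 : ∀ i : Fin n, (F.filter (fun p => p.1 = i)).card = 1 := by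
      intro i
      refine le_antisymm ?_ ?_
      · apply Finset.card_le_one.mpr
        intro a ha b hb
        simp only [hF, Finset.mem_filter, Finset.mem_univ, true_and] at ha hb
        exact hrows i ha.2 hb.2 (ha.1.trans hb.1.symm)
      · obtain ⟨p, hp, hfp⟩ := hsurj (R i) (hRinj i) (hRcard i) v
        refine Finset.card_pos.mpr ⟨p, ?_⟩
        simp only [hR, Finset.mem_filter, Finset.mem_univ, true_and] at hp
        simp [hF, hfp, hp]
    have hFcard : F.card = n := by
      have := Finset.card_eq_sum_card_fiberwise
        (fun (p : Fin n × Fin (n ^ 2)) (_ : p ∈ F) => Finset.mem_univ p.1)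
      rw [this]
      simp [hrow1]
    -- decompose fiber by boxes
    have hgdef : ∀ p : Fin n × Fin (n ^ 2), ((p.2 : ℕ) / n) < n := by
      intro p
      rw [Nat.div_lt_iff_lt_mul hn]
      exact lt_of_lt_of_le p.2.isLt (pow_two n).le
    set g : Fin n × Fin (n ^ 2) → Fin n := fun p => ⟨(p.2 : ℕ) / n, hgdef p⟩ with hg
    have hbox : F.card = ∑ k : Fin n, (F.filter (fun p => g p = k)).card :=
      Finset.card_eq_sum_card_fiberwise (fun p _ => Finset.mem_univ (g p))
    have hfil : ∀ k : Fin n, F.filter (fun p => g p = k) =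
        F.filter (fun p => (p.2 : ℕ) / n = (k : ℕ)) := by
      intro k; apply Finset.filter_congr; intro p _
      simp [hg, Fin.ext_iff]
    have hbox1 : ∀ k : Fin n, k ≠ k0 →
        (F.filter (fun p => (p.2 : ℕ) / n = (k : ℕ))).card = 1 := by
      intro k hk
      refine le_antisymm ?_ ?_
      · apply Finset.card_le_one.mpr
        intro a ha b hb
        simp only [hF, Finset.mem_filter, Finset.mem_univ, true_and] at ha hb
        exact hboxes k hk ha.2 hb.2 (ha.1.trans hb.1.symm)
      · obtain ⟨p, hp, hfp⟩ := hsurj (B k) (hBinj k hk) (hBcard k) v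
        refine Finset.card_pos.mpr ⟨p, ?_⟩
        simp only [hB, Finset.mem_filter, Finset.mem_univ, true_and] at hp
        simp [hF, hfp, hp]
    have hsplit : ∑ k : Fin n, (F.filter (fun p => g p = k)).card =
        (F.filter (fun p => (p.2 : ℕ) / n = (k0 : ℕ))).card +
          ∑ k ∈ univ.erase k0, (F.filter (fun p => (p.2 : ℕ) / n = (k : ℕ))).card := by
      rw [Finset.sum_congr rfl (fun k _ => by rw [hfil k])]
      rw [← Finset.add_sum_erase _ _ (Finset.mem_univ k0)]
    have herase : ∑ k ∈ univ.erase k0,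
        (F.filter (fun p => (p.2 : ℕ) / n = (k : ℕ))).card = n - 1 := by
      rw [Finset.sum_congr rfl (fun k hk => hbox1 k (Finset.ne_of_mem_erase hk))]
      simp [Finset.card_erase_of_mem]
    have hk0card : (F.filter (fun p => (p.2 : ℕ) / n = (k0 : ℕ))).card = 1 := by
      have := hFcard
      rw [hbox, hsplit, herase] at this
      omega
    have : F.filter (fun p => (p.2 : ℕ) / n = (k0 : ℕ)) =
        (univ : Finset (Fin n × Fin (n ^ 2))).filter
          (fun p => f p = v ∧ (p.2 : ℕ) / n = (k0 : ℕ)) := by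
      rw [hF, Finset.filter_filter]
    rwa [← this]
  -- conclude
  intro p hp q hq hfpq
  have hcard := key (f p)
  have hle := Finset.card_le_one.mp (le_of_eq hcard)
  apply hle
  · exact Finset.mem_filter.mpr ⟨Finset.mem_univ _, rfl, hp⟩
  · exact Finset.mem_filter.mpr ⟨Finset.mem_univ _, hfpq.symm, hq⟩
end

section
/- In the generalized size-n Sudoku, the dual chute lemma holds: for f : Fin n × Fin (n^2) → Fin (n^2), if f is injective on all n boxes of the chute and on all rows except one, then f is injective on the remaining row. -/
open Finset

/-- If `f` is injective on a finset whose cardinality equals that of the codomain,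
then every value is attained exactly once on that finset. -/
lemma chute_key {α β : Type*} [DecidableEq α] [Fintype β] [DecidableEq β]
    (s : Finset α) (f : α → β) (hinj : Set.InjOn f s)
    (hcard : s.card = Fintype.card β) (v : β) :
    (s.filter (fun a => f a = v)).card = 1 := by
  have himg : s.image f = Finset.univ := by
    apply Finset.eq_univ_of_card
    rw [Finset.card_image_of_injOn hinj, hcard]
  have hv : v ∈ s.image f := himg ▸ Finset.mem_univ v
  obtain ⟨a, has, hfa⟩ := Finset.mem_image.mp hv
  rw [Finset.card_eq_one]
  refine ⟨a, ?_⟩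
  ext b
  simp only [Finset.mem_filter, Finset.mem_singleton]
  constructor
  · rintro ⟨hbs, hfb⟩
    exact hinj hbs has (by rw [hfb, hfa])
  · rintro rfl
    exact ⟨has, hfa⟩

theorem general_chute_lemma_row (n : ℕ) (f : Fin n × Fin (n ^ 2) → Fin (n ^ 2))
    (i0 : Fin n)
    (hboxes : ∀ k : Fin n,
      Set.InjOn f {p : Fin n × Fin (n ^ 2) | (p.2 : ℕ) / n = (k : ℕ)})
    (hrows : ∀ i : Fin n, i ≠ i0 →
      Set.InjOn f {p : Fin n × Fin (n ^ 2) | p.1 = i}) :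
    Set.InjOn f {p : Fin n × Fin (n ^ 2) | p.1 = i0} := by
  classical
  have hn : 0 < n := i0.pos
  -- column filter card
  have hcol : ∀ k : Fin n,
      ((Finset.univ : Finset (Fin (n ^ 2))).filter
        (fun j : Fin (n ^ 2) => (j : ℕ) / n = (k : ℕ))).card = n := by
    intro k
    have : ((Finset.univ : Finset (Fin (n ^ 2))).filter
        (fun j : Fin (n ^ 2) => (j : ℕ) / n = (k : ℕ))).card
        = (Finset.univ : Finset (Fin n)).card := by
      refine Finset.card_bij' (fun j _ => (⟨(j : ℕ) % n, Nat.mod_lt _ hn⟩ : Fin n))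
        (fun t _ => (⟨n * (k : ℕ) + (t : ℕ), by
          have h1 : n * (k : ℕ) + (t : ℕ) < n * ((k : ℕ) + 1) := by
            rw [Nat.mul_succ]; exact Nat.add_lt_add_left t.isLt _
          calc n * (k : ℕ) + (t : ℕ) < n * ((k : ℕ) + 1) := h1
            _ ≤ n * n := Nat.mul_le_mul_left _ k.isLt
            _ = n ^ 2 := (sq n).symm⟩ : Fin (n ^ 2))) ?_ ?_ ?_ ?_
      · intro j _
        exact Finset.mem_univ _
      · intro t _
        simp only [Finset.mem_filter, Finset.mem_univ, true_and]
        simp [Nat.mul_add_div hn, Nat.div_eq_of_lt t.isLt]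
      · intro j hj
        simp only [Finset.mem_filter] at hj
        apply Fin.ext
        simp only
        rw [← hj.2]
        exact Nat.div_add_mod _ n
      · intro t _
        apply Fin.ext
        simp [Nat.mul_add_mod, Nat.mod_eq_of_lt t.isLt]
    simpa using this
  -- box finset card
  have hboxcard : ∀ k : Fin n,
      ((Finset.univ : Finset (Fin n × Fin (n ^ 2))).filter
        (fun p => (p.2 : ℕ) / n = (k : ℕ))).card = n ^ 2 := by
    intro k
    have : (Finset.univ : Finset (Fin n × Fin (n ^ 2))).filter
        (fun p => (p.2 : ℕ) / n = (k : ℕ)) =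
        (Finset.univ : Finset (Fin n)) ×ˢ
          ((Finset.univ : Finset (Fin (n ^ 2))).filter
            (fun j : Fin (n ^ 2) => (j : ℕ) / n = (k : ℕ))) := by
      ext p; simp [Finset.mem_product]
    rw [this, Finset.card_product, Finset.card_univ, Fintype.card_fin, hcol, sq]
  -- row finset card
  have hrowcard : ∀ i : Fin n,
      ((Finset.univ : Finset (Fin n × Fin (n ^ 2))).filter
        (fun p => p.1 = i)).card = n ^ 2 := by
    intro i
    have : (Finset.univ : Finset (Fin n × Fin (n ^ 2))).filter (fun p => p.1 = i)
        = {i} ×ˢ (Finset.univ : Finset (Fin (n ^ 2))) := by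
      ext p
      simp only [Finset.mem_filter, Finset.mem_univ, true_and, Finset.mem_product,
        Finset.mem_singleton, and_true]
    rw [this, Finset.card_product, Finset.card_singleton, Finset.card_univ,
      Fintype.card_fin, one_mul]
  -- per-value count in row i0 is 1
  have hmain : ∀ v : Fin (n ^ 2),
      (((Finset.univ : Finset (Fin n × Fin (n ^ 2))).filter
        (fun p => p.1 = i0 ∧ f p = v)).card = 1) := by
    intro v
    set S : Finset (Fin n × Fin (n ^ 2)) :=
      (Finset.univ : Finset (Fin n × Fin (n ^ 2))).filter (fun p => f p = v) with hS
    -- count via boxes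
    have hlt : ∀ p : Fin n × Fin (n ^ 2), (p.2 : ℕ) / n < n := by
      intro p
      have : (p.2 : ℕ) < n * n := by rw [← sq]; exact p.2.isLt
      exact Nat.div_lt_of_lt_mul (by omega)
    have hcount1 : S.card = n := by
      have hfib := Finset.card_eq_sum_card_fiberwise
        (f := fun p : Fin n × Fin (n ^ 2) => (⟨(p.2 : ℕ) / n, hlt p⟩ : Fin n))
        (s := S) (t := Finset.univ) (fun x _ => Finset.mem_univ _)
      rw [hfib]
      have heach : ∀ k : Fin n, (S.filter (fun p : Fin n × Fin (n ^ 2) =>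
          (⟨(p.2 : ℕ) / n, hlt p⟩ : Fin n) = k)).card = 1 := by
        intro k
        have heq : (S.filter (fun p : Fin n × Fin (n ^ 2) =>
            (⟨(p.2 : ℕ) / n, hlt p⟩ : Fin n) = k)) =
            (((Finset.univ : Finset (Fin n × Fin (n ^ 2))).filter
              (fun p => (p.2 : ℕ) / n = (k : ℕ))).filter (fun p => f p = v)) := by
          ext p
          simp only [hS, Finset.mem_filter, Finset.mem_univ, true_and, Fin.ext_iff]
          tauto
        rw [heq]
        apply chute_key _ f _ (by rw [hboxcard k, Fintype.card_fin]) v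
        have : ↑((Finset.univ : Finset (Fin n × Fin (n ^ 2))).filter
            (fun p => (p.2 : ℕ) / n = (k : ℕ))) =
            {p : Fin n × Fin (n ^ 2) | (p.2 : ℕ) / n = (k : ℕ)} := by
          ext p; simp
        rw [this]; exact hboxes k
      rw [Finset.sum_congr rfl (fun k _ => heach k), Finset.sum_const,
        Finset.card_univ, Fintype.card_fin, smul_eq_mul, mul_one]
    -- count via rows
    have hcount2 : S.card =
        (S.filter (fun p => p.1 = i0)).card + (n - 1) := by
      have := Finset.card_eq_sum_card_fiberwise
        (f := fun p : Fin n × Fin (n ^ 2) => p.1)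
        (s := S) (t := Finset.univ) (fun x _ => Finset.mem_univ _)
      rw [this, ← Finset.add_sum_erase _ _ (Finset.mem_univ i0)]
      congr 1
      have heach : ∀ i ∈ Finset.univ.erase i0,
          (S.filter (fun p => p.1 = i)).card = 1 := by
        intro i hi
        have hne : i ≠ i0 := Finset.ne_of_mem_erase hi
        have heq : S.filter (fun p => p.1 = i) =
            (((Finset.univ : Finset (Fin n × Fin (n ^ 2))).filter
              (fun p => p.1 = i)).filter (fun p => f p = v)) := by
          ext p
          simp only [hS, Finset.mem_filter, Finset.mem_univ, true_and]
          tauto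
        rw [heq]
        apply chute_key _ f _ (by rw [hrowcard i, Fintype.card_fin]) v
        have : ↑((Finset.univ : Finset (Fin n × Fin (n ^ 2))).filter
            (fun p => p.1 = i)) = {p : Fin n × Fin (n ^ 2) | p.1 = i} := by
          ext p; simp
        rw [this]; exact hrows i hne
      rw [Finset.sum_congr rfl heach, Finset.sum_const, smul_eq_mul, mul_one,
        Finset.card_erase_of_mem (Finset.mem_univ i0), Finset.card_univ,
        Fintype.card_fin]
    have hfinal : (S.filter (fun p => p.1 = i0)).card = 1 := by omega
    have heq : (Finset.univ : Finset (Fin n × Fin (n ^ 2))).filter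
        (fun p => p.1 = i0 ∧ f p = v) = S.filter (fun p => p.1 = i0) := by
      ext p
      simp only [hS, Finset.mem_filter, Finset.mem_univ, true_and]
      tauto
    rw [heq]; exact hfinal
  -- conclude injectivity
  intro a ha b hb hab
  have ha' : a ∈ (Finset.univ : Finset (Fin n × Fin (n ^ 2))).filter
      (fun p => p.1 = i0 ∧ f p = f a) := by
    exact Finset.mem_filter.mpr ⟨Finset.mem_univ _, ha, rfl⟩
  have hb' : b ∈ (Finset.univ : Finset (Fin n × Fin (n ^ 2))).filter
      (fun p => p.1 = i0 ∧ f p = f a) := by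
    exact Finset.mem_filter.mpr ⟨Finset.mem_univ _, hb, hab.symm⟩
  exact Finset.card_le_one.mp (le_of_eq (hmain (f a))) a ha' b hb'
end
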